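/- If w ∈ W satisfies wΔ̄ = Δ̄ where Δ̄ = Δ ∪ {−θ}, then w(−θ) is either −θ or a special simple root (coefficient 1 in the highest root). -/

import Mathlib

/-!
Write `θ = ∑ mⱼ Δⱼ` and suppose `w(-θ) = Δᵢ`. Applying `w` gives `-Δᵢ = ∑ mⱼ w(Δⱼ)`.
Each `w(Δⱼ)` lies in `Δ̄` but differs from `Δᵢ = w(-θ)`, so pairing it with the fundamental
coweight `ϖᵢ` gives `0` or `⟪ϖᵢ, -θ⟫ = -mᵢ`. Pairing the whole identity with `ϖᵢ` therefore
yields `1 = mᵢ · k` for a natural number `k`, whence `mᵢ = 1`.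
-/

open scoped RealInnerProductSpace

variable {V : Type*} [NormedAddCommGroup V] [InnerProductSpace ℝ V]

/-- The Weyl group: the subgroup of linear isometries generated by the
reflections in the roots. -/
def weylGroup (R : Finset V) : Subgroup (V ≃ₗᵢ[ℝ] V) :=
  Subgroup.closure {w | ∃ α ∈ R, ∀ v, w v = v - (2 * ⟪v, α⟫ / ⟪α, α⟫) • α}

section DualFamily

variable {n : ℕ} {Δ ϖ : Fin n → V} (hϖ : ∀ i j, ⟪ϖ i, Δ j⟫ = if i = j then 1 else 0)
include hϖ

theorem inner_sum_smul_of_dual (c : Fin n → ℝ) (i : Fin n) :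
    ⟪ϖ i, ∑ j, c j • Δ j⟫ = c i := by
  simp [inner_sum, real_inner_smul_right, hϖ]

theorem neg_sum_natCast_smul_ne_of_dual (m : Fin n → ℕ) (i : Fin n) :
    -∑ j, (m j : ℝ) • Δ j ≠ Δ i := by
  intro h
  have h' := congrArg (⟪ϖ i, ·⟫) h
  simp only [inner_neg_right, inner_sum_smul_of_dual hϖ, hϖ, ↓reduceIte] at h'
  linarith [(m i).cast_nonneg (α := ℝ)]

theorem exists_inner_eq_of_mem_insert_neg_sum {m : Fin n → ℕ} {i : Fin n} {x : V}
    (hx : x ∈ insert (-∑ j, (m j : ℝ) • Δ j) (Set.range Δ)) (hxi : x ≠ Δ i) :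
    ∃ k : ℕ, ⟪ϖ i, x⟫ = -((m i : ℝ) * k) := by
  rcases hx with rfl | ⟨j, rfl⟩
  · exact ⟨1, by simp [inner_neg_right, inner_sum_smul_of_dual hϖ]⟩
  · exact ⟨0, by simp [hϖ, show i ≠ j by rintro rfl; exact hxi rfl]⟩

theorem coeff_eq_one_of_map_neg_eq {m : Fin n → ℕ} {θ : V} (hθ : θ = ∑ j, (m j : ℝ) • Δ j)
    {f : V →ₗ[ℝ] V} (hf : Function.Injective f)
    (hmaps : Set.MapsTo f (insert (-θ) (Set.range Δ)) (insert (-θ) (Set.range Δ)))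
    {i : Fin n} (hi : f (-θ) = Δ i) : m i = 1 := by
  subst hθ
  have hne : ∀ j, f (Δ j) ≠ Δ i := fun j h =>
    neg_sum_natCast_smul_ne_of_dual hϖ m j (hf (hi.trans h.symm))
  choose k hk using fun j =>
    exists_inner_eq_of_mem_insert_neg_sum hϖ (hmaps (Set.mem_insert_of_mem _ ⟨j, rfl⟩)) (hne j)
  have hpair : (1 : ℝ) = (m i : ℝ) * ∑ j, (m j : ℝ) * k j := by
    have h := congrArg (⟪ϖ i, ·⟫) hi
    simp only [map_neg, map_sum, map_smul, inner_neg_right, inner_sum, real_inner_smul_right,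
      hk, hϖ, ↓reduceIte] at h
    rw [← h, Finset.mul_sum]
    simp only [← Finset.sum_neg_distrib]
    exact Finset.sum_congr rfl fun j _ => by ring
  exact Nat.eq_one_of_mul_eq_one_right (by exact_mod_cast hpair.symm)

end DualFamily

theorem stabilizer_image_of_lowest_root_general
    (θ : V)
    {n : ℕ} (Δ : Fin n → V)
    (m : Fin n → ℕ)
    (hθsum : θ = ∑ i, (m i : ℝ) • Δ i)
    (ϖ : Fin n → V)
    (hϖ : ∀ i j, ⟪ϖ i, Δ j⟫ = if i = j then 1 else 0)
    (w : V ≃ₗᵢ[ℝ] V)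
    (hstab : (fun v => w v) '' (insert (-θ) (Set.range Δ)) =
      insert (-θ) (Set.range Δ)) :
    w (-θ) = -θ ∨ ∃ i, m i = 1 ∧ w (-θ) = Δ i := by
  have hmaps : Set.MapsTo w.toLinearMap (insert (-θ) (Set.range Δ))
      (insert (-θ) (Set.range Δ)) :=
    fun x hx => hstab ▸ Set.mem_image_of_mem _ hx
  rcases hmaps (Set.mem_insert _ _) with h | ⟨i, hi⟩
  · exact Or.inl h
  · exact Or.inr ⟨i, coeff_eq_one_of_map_neg_eq hϖ hθsum w.injective hmaps hi.symm, hi.symm⟩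

/-- If `w ∈ W` satisfies `wΔ̄ = Δ̄` where `Δ̄ = Δ ∪ {-θ}`, then `w(-θ)` is
either `-θ` or a special simple root (coefficient 1 in the highest root). -/
theorem stabilizer_image_of_lowest_root
    (R : Finset V)
    (h0 : (0 : V) ∉ R)
    (hspan : Submodule.span ℝ (R : Set V) = ⊤)
    (hneg : ∀ α ∈ R, -α ∈ R)
    (hint : ∀ α ∈ R, ∀ β ∈ R, ∃ z : ℤ, 2 * ⟪α, β⟫ / ⟪α, α⟫ = (z : ℝ))
    (hrefl : ∀ α ∈ R, ∀ β ∈ R, β - (2 * ⟪β, α⟫ / ⟪α, α⟫) • α ∈ R)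
    (hirr : ∀ R₁ R₂ : Set V, (R : Set V) = R₁ ∪ R₂ →
      (∀ α ∈ R₁, ∀ β ∈ R₂, ⟪α, β⟫ = 0) → R₁ = ∅ ∨ R₂ = ∅)
    (θ : V) (hθR : θ ∈ R) (hθ2 : ⟪θ, θ⟫ = 2)
    (hlong : ∀ α ∈ R, ⟪α, α⟫ ≤ ⟪θ, θ⟫)
    {n : ℕ} (Δ : Fin n → V)
    (hΔR : ∀ i, Δ i ∈ R)
    (hΔind : LinearIndependent ℝ Δ)
    (hbase : ∀ α ∈ R, α ∈ AddSubmonoid.closure (Set.range Δ) ∨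
      -α ∈ AddSubmonoid.closure (Set.range Δ))
    (m : Fin n → ℕ) (hm : ∀ i, 1 ≤ m i)
    (hθsum : θ = ∑ i, (m i : ℝ) • Δ i)
    (ϖ : Fin n → V)
    (hϖ : ∀ i j, ⟪ϖ i, Δ j⟫ = if i = j then 1 else 0)
    (w : V ≃ₗᵢ[ℝ] V) (hw : w ∈ weylGroup R)
    (hstab : (fun v => w v) '' (insert (-θ) (Set.range Δ)) =
      insert (-θ) (Set.range Δ)) :
    w (-θ) = -θ ∨ ∃ i, m i = 1 ∧ w (-θ) = Δ i :=
  stabilizer_image_of_lowest_root_general θ Δ m hθsum ϖ hϖ w hstab
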